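/- arXiv:2001.00312 — 3 statements merged into one kernel-verified Lean document; each statement's English description precedes it below -/
import Mathlib

section
/- For every integer n ≥ 2 and for k ∈ {2, 3}, the locating chromatic number of the complete n-ary tree T(n,k) equals n + k − 1. -/
/-- Vertices of the complete `n`-ary tree of depth `k`:
sequences over an `n`-letter alphabet (encoded as `Fin n`) of length at most `k`. -/
def naryVertex (n k : ℕ) : Type := {l : List (Fin n) // l.length ≤ k}

/-- The complete `n`-ary tree `T(n,k)`: the empty sequence is the root (center), and
each sequence is adjacent to its one-letter extensions. -/
def naryTree (n k : ℕ) : SimpleGraph (naryVertex n k) where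
  Adj u v := (∃ a : Fin n, u.1 = a :: v.1) ∨ (∃ a : Fin n, v.1 = a :: u.1)
  symm := ⟨fun u v h => h.symm⟩
  loopless := ⟨by
    rintro u (⟨a, ha⟩ | ⟨a, ha⟩) <;>
      simpa using congrArg List.length ha⟩

/-- The root (center) of `T(n,k)`: the empty sequence. -/
def naryRoot (n k : ℕ) : naryVertex n k := ⟨[], Nat.zero_le k⟩

/-- `c` is a locating `m`-coloring of `G`: a proper vertex coloring with colors in
`{1,…,m}` such that all vertices have distinct color codes, where the color code of `v`
is the tuple of distances `d(v, C_i) = min {d(v,x) : x ∈ C_i}` to the color classes. -/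
def IsLocatingColoring {V : Type*} (G : SimpleGraph V) (m : ℕ) (c : V → ℕ) : Prop :=
  (∀ v, c v ∈ Finset.Icc 1 m) ∧
  (∀ u v, G.Adj u v → c u ≠ c v) ∧
  Function.Injective
    (fun v => fun i : ℕ => sInf {d : ℕ | ∃ x, c x = i ∧ G.dist v x = d})

/-- The locating chromatic number of `G`: the least `m` such that `G` has a
locating `m`-coloring. -/
noncomputable def locatingChromaticNumber {V : Type*} (G : SimpleGraph V) : ℕ :=
  sInf {m | ∃ c : V → ℕ, IsLocatingColoring G m c}

/-!
For the upper bounds, the root gets the largest color and the depth-one vertex `[j]` gets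
`j + 1`. In `T(n,2)` the leaves below `[j]` get the other `n` colors. In `T(n,3)` the children
of `[j]` get `{1, …, n+1} \ {j+1}`, and the leaves below `[b, j]` get all colors but two: that
of `[b, j]` and a color that `[b, j]` only sees at distance `2`. These two colors determine
`[b, j]`, and only leaves have a code entry `3`.

For the lower bounds: two sibling leaves have the same neighborhood, so a locating coloring
gives them distinct colors, all different from their parent's; this forces `n + 1` colors.
Suppose `T(n,k)`, `k ≥ 3`, has a locating coloring with exactly `n + 1` colors. Then the
leaves below a vertex `p` of depth `k - 1` carry every color except `c p`, so `p` sees every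
color at distance at most `1`, and the code of a leaf below `p` only depends on its own color
and on `c p`. There are `n² > n + 1` such vertices `p`, so two of them share a color, and
leaves of a common color below them have equal codes.
-/

open Finset

namespace SimpleGraph

variable {V : Type*} {G : SimpleGraph V} {c : V → ℕ} {u v w x : V} {i d : ℕ}

theorem eq_or_adj_of_dist_lt_two (hG : G.Preconnected) (h : G.dist u v < 2) :
    u = v ∨ G.Adj u v := by
  by_contra! huv
  have := (hG u v).one_lt_dist_of_ne_of_not_adj huv.1 huv.2
  omega

theorem dist_le_two (h₁ : G.Adj u w) (h₂ : G.Adj w v) : G.dist u v ≤ 2 :=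
  G.dist_le (.cons h₁ (.cons h₂ .nil))

theorem dist_le_dist_of_adj_imp_adj (hG : G.Preconnected) (h : ∀ w, G.Adj u w → G.Adj v w)
    (hx : x ≠ u) : G.dist v x ≤ G.dist u x := by
  obtain ⟨p, hp⟩ := (hG u x).exists_walk_length_eq_dist
  match p, hx with
  | .cons hadj q, _ => simpa [← hp] using G.dist_le (.cons (h _ hadj) q)

theorem dist_eq_dist_add_one_of_adj_iff (hG : G.Preconnected) (hu : ∀ w, G.Adj u w ↔ w = v)
    (hx : x ≠ u) : G.dist u x = G.dist v x + 1 := by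
  obtain ⟨q, hq⟩ := (hG v x).exists_walk_length_eq_dist
  obtain ⟨p, hp⟩ := (hG u x).exists_walk_length_eq_dist
  refine le_antisymm (by simpa [← hq] using G.dist_le (.cons ((hu v).2 rfl) q)) ?_
  match p, hx with
  | .cons hadj p', _ =>
    obtain rfl := (hu _).1 hadj
    simpa [← hp] using G.dist_le p'

/-- The `i`-th entry of the color code of `v` in `IsLocatingColoring`; it is `0` for an unused
color `i`, since `sInf ∅ = 0`. -/
noncomputable def colorCode (G : SimpleGraph V) (c : V → ℕ) (v : V) (i : ℕ) : ℕ :=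
  sInf {d : ℕ | ∃ x, c x = i ∧ G.dist v x = d}

theorem colorCode_le (hx : c x = i) : G.colorCode c v i ≤ G.dist v x :=
  Nat.sInf_le ⟨x, hx, rfl⟩

theorem exists_dist_eq_colorCode (hx : c x = i) :
    ∃ y, c y = i ∧ G.dist v y = G.colorCode c v i :=
  Nat.sInf_mem (s := {d | ∃ x, c x = i ∧ G.dist v x = d}) ⟨_, x, hx, rfl⟩

theorem colorCode_eq_zero_of_forall_ne (h : ∀ x, c x ≠ i) : G.colorCode c v i = 0 := by
  simp [colorCode, h]

theorem colorCode_self : G.colorCode c v (c v) = 0 :=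
  Nat.eq_zero_of_le_zero (by simpa using colorCode_le (G := G) (v := v) (x := v) rfl)

theorem colorCode_eq (hx : c x = i) (hd : G.dist v x ≤ d)
    (hmin : ∀ y, G.dist v y < d → c y ≠ i) : G.colorCode c v i = d := by
  refine le_antisymm ((colorCode_le hx).trans hd) (not_lt.1 fun hlt => ?_)
  obtain ⟨y, hy, hyd⟩ := G.exists_dist_eq_colorCode (v := v) hx
  exact hmin y (hyd ▸ hlt) hy

theorem colorCode_le_colorCode_add_one (hadj : G.Adj u v) (i : ℕ) :
    G.colorCode c u i ≤ G.colorCode c v i + 1 := by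
  by_cases hi : ∃ x, c x = i
  · obtain ⟨x, hx⟩ := hi
    obtain ⟨y, hy, hvy⟩ := G.exists_dist_eq_colorCode (v := v) hx
    calc G.colorCode c u i ≤ G.dist u y := colorCode_le hy
      _ ≤ G.dist u v + G.dist v y := hadj.reachable.dist_triangle_left y
      _ = G.colorCode c v i + 1 := by rw [dist_eq_one_iff_adj.2 hadj, hvy, add_comm]
  · rw [colorCode_eq_zero_of_forall_ne (not_exists.1 hi)]
    exact Nat.zero_le _

theorem colorCode_eq_zero_iff (hG : G.Preconnected) (hx : c x = i) :
    G.colorCode c v i = 0 ↔ c v = i := by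
  refine ⟨fun h => ?_, fun h => h ▸ colorCode_self⟩
  obtain ⟨y, hy, hvy⟩ := G.exists_dist_eq_colorCode (v := v) hx
  rwa [← ((hG v y).dist_eq_zero_iff.1 (hvy.trans h))] at hy

theorem colorCode_eq_one (hG : G.Preconnected) (hadj : G.Adj v x) (hx : c x = i)
    (hi : c v ≠ i) : G.colorCode c v i = 1 := by
  refine colorCode_eq hx (dist_eq_one_iff_adj.2 hadj).le fun y hy => ?_
  rwa [← (hG v y).dist_eq_zero_iff.1 (Nat.lt_one_iff.1 hy)]

theorem apply_eq_of_colorCode_eq (hG : G.Preconnected) (h : G.colorCode c u = G.colorCode c v) :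
    c u = c v :=
  (colorCode_eq_zero_iff hG rfl).1 (congrFun h (c v) ▸ colorCode_self)

theorem colorCode_eq_of_adj_iff (hG : G.Preconnected) (h : ∀ w, G.Adj u w ↔ G.Adj v w)
    (hc : c u = c v) : G.colorCode c u = G.colorCode c v := by
  funext i
  by_cases hi : c u = i
  · rw [(colorCode_eq_zero_iff hG hi).2 hi, (colorCode_eq_zero_iff hG hi).2 (hc ▸ hi)]
  · have hdist : ∀ x, c x = i → G.dist u x = G.dist v x := fun x hx =>
      le_antisymm (dist_le_dist_of_adj_imp_adj hG (fun w => (h w).2) (by grind))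
        (dist_le_dist_of_adj_imp_adj hG (fun w => (h w).1) (by grind))
    simp only [colorCode]
    congr 1
    ext d
    exact exists_congr fun x => and_congr_right fun hx => by rw [hdist x hx]

def HasColorfulNeighborhood (G : SimpleGraph V) (c : V → ℕ) (v : V) : Prop :=
  ∀ x, c x ≠ c v → ∃ w, G.Adj v w ∧ c w = c x

theorem HasColorfulNeighborhood.colorCode_le_one (h : G.HasColorfulNeighborhood c v) (i : ℕ) :
    G.colorCode c v i ≤ 1 := by
  by_cases hi : ∃ x, c x = i
  · obtain ⟨x, rfl⟩ := hi
    by_cases hx : c x = c v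
    · rw [hx, colorCode_self]
      exact zero_le_one
    · obtain ⟨w, hw, hwx⟩ := h x hx
      exact (colorCode_le hwx).trans (dist_eq_one_iff_adj.2 hw).le
  · rw [colorCode_eq_zero_of_forall_ne (not_exists.1 hi)]
    exact zero_le_one

theorem HasColorfulNeighborhood.colorCode_eq (hG : G.Preconnected)
    (hu : G.HasColorfulNeighborhood c u) (hv : G.HasColorfulNeighborhood c v) (hc : c u = c v) :
    G.colorCode c u = G.colorCode c v := by
  funext i
  by_cases hi : ∃ x, c x = i
  · obtain ⟨x, rfl⟩ := hi
    by_cases hx : c x = c u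
    · rw [hx, colorCode_self, hc, colorCode_self]
    obtain ⟨w, hw, hwx⟩ := hu x hx
    obtain ⟨w', hw', hw'x⟩ := hv x (hc ▸ hx)
    rw [colorCode_eq_one hG hw hwx (Ne.symm hx), colorCode_eq_one hG hw' hw'x (hc ▸ Ne.symm hx)]
  · rw [colorCode_eq_zero_of_forall_ne (not_exists.1 hi),
      colorCode_eq_zero_of_forall_ne (not_exists.1 hi)]

theorem colorCode_eq_add_one_of_adj_iff (hG : G.Preconnected) (hu : ∀ w, G.Adj u w ↔ w = v)
    (hx : c x = i) (hi : c u ≠ i) : G.colorCode c u i = G.colorCode c v i + 1 := by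
  obtain ⟨y, hy, hvy⟩ := G.exists_dist_eq_colorCode (v := v) hx
  have hdist : ∀ z, c z = i → G.dist u z = G.dist v z + 1 := fun z hz =>
    dist_eq_dist_add_one_of_adj_iff hG hu (by grind)
  refine colorCode_eq hy (by rw [hdist y hy, hvy]) fun z hz hzi => ?_
  rw [hdist z hzi] at hz
  exact (colorCode_le (G := G) (v := v) hzi).not_gt (by omega)

theorem eq_of_colorCode_eq_one (hu : ∀ w, G.Adj u w ↔ w = v) (h : G.colorCode c u i = 1) :
    c v = i := by
  by_cases hi : ∃ x, c x = i
  · obtain ⟨x, hx⟩ := hi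
    obtain ⟨y, hy, huy⟩ := G.exists_dist_eq_colorCode (v := u) hx
    rwa [← (hu y).1 (dist_eq_one_iff_adj.1 (huy.trans h))]
  · rw [colorCode_eq_zero_of_forall_ne (not_exists.1 hi)] at h
    exact absurd h zero_ne_one

theorem colorCode_eq_of_adj_iff_of_colorCode_eq (hG : G.Preconnected) {u' v' : V}
    (hu : ∀ w, G.Adj u w ↔ w = v) (hu' : ∀ w, G.Adj u' w ↔ w = v') (hc : c u = c u')
    (hv : G.colorCode c v = G.colorCode c v') : G.colorCode c u = G.colorCode c u' := by
  funext i
  by_cases hi : c u = i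
  · rw [(colorCode_eq_zero_iff hG hi).2 hi, (colorCode_eq_zero_iff hG hi).2 (hc ▸ hi)]
  by_cases hused : ∃ x, c x = i
  · obtain ⟨x, hx⟩ := hused
    rw [colorCode_eq_add_one_of_adj_iff hG hu hx hi,
      colorCode_eq_add_one_of_adj_iff hG hu' hx (hc ▸ hi), hv]
  · rw [colorCode_eq_zero_of_forall_ne (not_exists.1 hused),
      colorCode_eq_zero_of_forall_ne (not_exists.1 hused)]

end SimpleGraph

open SimpleGraph

section IsLocatingColoring

variable {V : Type*} {G : SimpleGraph V} {m : ℕ} {c : V → ℕ}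

theorem IsLocatingColoring.apply_mem (hc : IsLocatingColoring G m c) (v : V) :
    c v ∈ Finset.Icc 1 m :=
  hc.1 v

theorem IsLocatingColoring.apply_ne_of_adj (hc : IsLocatingColoring G m c) {u v : V}
    (h : G.Adj u v) : c u ≠ c v :=
  hc.2.1 u v h

theorem IsLocatingColoring.injective (hc : IsLocatingColoring G m c) :
    Function.Injective (G.colorCode c) :=
  hc.2.2

theorem IsLocatingColoring.apply_ne_of_adj_iff (hc : IsLocatingColoring G m c)
    (hG : G.Preconnected) {u v : V} (huv : u ≠ v) (h : ∀ w, G.Adj u w ↔ G.Adj v w) :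
    c u ≠ c v :=
  fun hcuv => huv (hc.injective (colorCode_eq_of_adj_iff hG h hcuv))

end IsLocatingColoring

theorem locatingChromaticNumber_eq {V : Type*} {G : SimpleGraph V} {N : ℕ}
    (hex : ∃ c, IsLocatingColoring G N c) (hmin : ∀ m c, IsLocatingColoring G m c → N ≤ m) :
    locatingChromaticNumber G = N :=
  le_antisymm (Nat.sInf_le hex) (le_csInf ⟨N, hex⟩ fun m ⟨c, hc⟩ => hmin m c hc)

-- Unlike `⟨l, h⟩`, this term has type `naryVertex n k` syntactically, as `rw` needs.
abbrev naryVertex.ofList {n k : ℕ} (l : List (Fin n)) (h : l.length ≤ k) : naryVertex n k :=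
  ⟨l, h⟩

namespace naryTree

variable {n k m : ℕ}

theorem adj_cons (a : Fin n) (t : List (Fin n)) (h : (a :: t).length ≤ k) :
    (naryTree n k).Adj (.ofList (a :: t) h) (.ofList t (Nat.le_of_succ_le h)) :=
  .inl ⟨a, rfl⟩

theorem reachable_root (v : naryVertex n k) : (naryTree n k).Reachable v (naryRoot n k) := by
  obtain ⟨l, hl⟩ := v
  induction l with
  | nil => rfl
  | cons a t ih => exact (adj_cons a t hl).reachable.trans (ih _)

theorem preconnected : (naryTree n k).Preconnected := fun u v =>
  (reachable_root u).trans (reachable_root v).symm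

theorem adj_iff_of_length_eq (a : Fin n) (t : List (Fin n)) (ht : t.length + 1 = k)
    (x : naryVertex n k) :
    (naryTree n k).Adj (.ofList (a :: t) ht.le) x ↔ x = .ofList t (by omega) := by
  refine ⟨?_, fun hx => hx ▸ adj_cons a t _⟩
  rintro (⟨b, hb⟩ | ⟨b, hb⟩)
  · exact Subtype.ext (List.cons.inj hb).2.symm
  · have := x.2
    simp only [hb, List.length_cons] at this
    omega

theorem adj_ofList_cons_iff {a : Fin n} {t : List (Fin n)} {h : (a :: t).length ≤ k}
    {x : naryVertex n k} :
    (naryTree n k).Adj (.ofList (a :: t) h) x ↔ x.1 = t ∨ ∃ b, x.1 = b :: a :: t := by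
  simp only [naryTree, naryVertex.ofList, List.cons.injEq, exists_eq_left', eq_comm]

variable {c : naryVertex n k → ℕ}

theorem apply_ne_of_adj_of_apply_cons_ne
    (h : ∀ a t (ha : (a :: t).length ≤ k),
      c (.ofList (a :: t) ha) ≠ c (.ofList t (Nat.le_of_succ_le ha)))
    {u v : naryVertex n k} (huv : (naryTree n k).Adj u v) : c u ≠ c v := by
  obtain ⟨u, hu⟩ := u
  obtain ⟨v, hv⟩ := v
  rcases huv with ⟨a, rfl⟩ | ⟨a, rfl⟩
  · exact h a v hu
  · exact (h a u hv).symm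

theorem injective_apply_cons (hc : IsLocatingColoring (naryTree n k) m c) (t : List (Fin n))
    (ht : t.length + 1 = k) : Function.Injective fun a : Fin n => c (.ofList (a :: t) ht.le) := by
  intro a b hab
  by_contra hne
  refine hc.apply_ne_of_adj_iff preconnected (fun h => hne ?_) (fun x => ?_) hab
  · exact (List.cons.inj (congrArg Subtype.val h)).1
  · rw [adj_iff_of_length_eq _ _ ht, adj_iff_of_length_eq _ _ ht]

theorem apply_cons_mem (hc : IsLocatingColoring (naryTree n k) m c) (t : List (Fin n))
    (ht : t.length + 1 = k) (a : Fin n) :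
    c (.ofList (a :: t) ht.le) ∈ (Icc 1 m).erase (c (.ofList t (by omega))) :=
  mem_erase.2 ⟨hc.apply_ne_of_adj (adj_cons a t _), hc.apply_mem _⟩

theorem succ_le_of_isLocatingColoring (hc : IsLocatingColoring (naryTree n k) m c)
    (t : List (Fin n)) (ht : t.length + 1 = k) : n + 1 ≤ m := by
  have hcard := card_le_card_of_injOn (s := univ) _ (fun a _ => apply_cons_mem hc t ht a)
    (injective_apply_cons hc t ht).injOn
  have hm := mem_Icc.1 (hc.apply_mem (.ofList t (by omega)))
  rw [card_univ, Fintype.card_fin, card_erase_of_mem (hc.apply_mem _), Nat.card_Icc] at hcard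
  omega

theorem exists_apply_cons_eq (hc : IsLocatingColoring (naryTree n k) m c) (hm : m ≤ n + 1)
    (t : List (Fin n)) (ht : t.length + 1 = k) :
    ∀ i ∈ (Icc 1 m).erase (c (.ofList t (by omega))),
      ∃ a, c (.ofList (a :: t) ht.le) = i := by
  have hcard : #((Icc 1 m).erase (c (.ofList t (by omega)))) ≤ #(univ : Finset (Fin n)) := by
    rw [card_univ, Fintype.card_fin, card_erase_of_mem (hc.apply_mem _), Nat.card_Icc]
    omega
  intro i hi
  obtain ⟨a, -, rfl⟩ := surj_on_of_inj_on_of_card_le (fun a _ => c (.ofList (a :: t) ht.le))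
    (fun a _ => apply_cons_mem hc t ht a) (fun a b _ _ h => injective_apply_cons hc t ht h)
    hcard i hi
  exact ⟨a, rfl⟩

theorem hasColorfulNeighborhood_of_isLocatingColoring
    (hc : IsLocatingColoring (naryTree n k) m c) (hm : m ≤ n + 1) (t : List (Fin n))
    (ht : t.length + 1 = k) : (naryTree n k).HasColorfulNeighborhood c (.ofList t (by omega)) :=
  fun x hx => by
    obtain ⟨a, ha⟩ := exists_apply_cons_eq hc hm t ht _ (mem_erase.2 ⟨hx, hc.apply_mem x⟩)
    exact ⟨_, (adj_cons a t _).symm, ha⟩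

theorem add_two_le_of_isLocatingColoring (hn : 2 ≤ n) (hc : IsLocatingColoring (naryTree n k) m c)
    (t : List (Fin n)) (ht : t.length + 3 = k) : n + 2 ≤ m := by
  by_contra! hm
  let P : Fin n × Fin n → naryVertex n k := fun p => .ofList (p.1 :: p.2 :: t) (by simp; omega)
  have hcard : #(Icc 1 m) < #(univ : Finset (Fin n × Fin n)) := by
    rw [Nat.card_Icc, Nat.add_sub_cancel, card_univ, Fintype.card_prod, Fintype.card_fin]
    nlinarith
  obtain ⟨p, -, q, -, hpq, hPpq⟩ :=
    exists_ne_map_eq_of_card_lt_of_maps_to (f := fun p => c (P p)) hcard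
      fun p _ => hc.apply_mem (P p)
  have hcode : (naryTree n k).colorCode c (P p) = (naryTree n k).colorCode c (P q) :=
    HasColorfulNeighborhood.colorCode_eq preconnected
      (hasColorfulNeighborhood_of_isLocatingColoring hc (by omega) _ (by simp; omega))
      (hasColorfulNeighborhood_of_isLocatingColoring hc (by omega) _ (by simp; omega)) hPpq
  let a₀ : Fin n := ⟨0, by omega⟩
  have hleaf₀ := hc.apply_ne_of_adj (adj_cons a₀ (p.1 :: p.2 :: t) (by simp; omega))
  obtain ⟨a, ha⟩ := exists_apply_cons_eq hc (by omega) (q.1 :: q.2 :: t) (by simp; omega) _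
    (mem_erase.2 ⟨hPpq ▸ hleaf₀, hc.apply_mem _⟩)
  have hleaf := hc.injective (colorCode_eq_of_adj_iff_of_colorCode_eq preconnected
    (adj_iff_of_length_eq a₀ (p.1 :: p.2 :: t) (by simp; omega))
    (adj_iff_of_length_eq a (q.1 :: q.2 :: t) (by simp; omega)) ha.symm hcode)
  have hval := congrArg Subtype.val hleaf
  simp only [List.cons.injEq, and_true] at hval
  exact hpq (Prod.ext hval.2.1 hval.2.2)

/-- `childColor j` enumerates `{1, …, n+1} \ {j+1}`, the colors of the children of the
depth-one vertex `[j]` in both colorings below. -/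
def childColor (j b : Fin n) : ℕ := if b < j then b + 1 else b + 2

theorem childColor_mem (j b : Fin n) : childColor j b ∈ Icc 1 (n + 1) := by
  have := b.isLt
  rw [childColor, mem_Icc]
  split <;> omega

theorem childColor_ne (j b : Fin n) : childColor j b ≠ j + 1 := by
  unfold childColor
  split <;> omega

theorem childColor_self (j : Fin n) : childColor j j = j + 2 := by
  simp [childColor]

theorem childColor_injective (j : Fin n) : Function.Injective (childColor j) := by
  intro b b' h
  unfold childColor at h
  split at h <;> split at h <;> omega

theorem exists_childColor_eq (j : Fin n) {i : ℕ} (hi : i ∈ Icc 1 (n + 1)) (hij : i ≠ j + 1) :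
    ∃ b, childColor j b = i := by
  rw [mem_Icc] at hi
  rcases lt_or_gt_of_ne hij with h | h
  · refine ⟨⟨i - 1, by omega⟩, ?_⟩
    rw [childColor, if_pos (Fin.lt_def.2 (by simp; omega))]
    simp only
    omega
  · refine ⟨⟨i - 2, by omega⟩, ?_⟩
    rw [childColor, if_neg (Fin.lt_def.not.2 (by simp; omega))]
    simp only
    omega

/-- The one color that the depth-two vertex `[b, j]` of `T(n,3)` sees only at distance `2`:
the root's color when `b = j`, the color `j + 2` of its sibling `[j, j]` otherwise. -/
def missingColor (j b : Fin n) : ℕ := if b = j then n + 2 else j + 2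

theorem missingColor_mem (j b : Fin n) : missingColor j b ∈ Icc 1 (n + 2) := by
  have := j.isLt
  rw [missingColor, mem_Icc]
  split <;> omega

theorem missingColor_ne (j b : Fin n) : missingColor j b ≠ j + 1 := by
  have := j.isLt
  unfold missingColor
  split <;> omega

theorem missingColor_ne_childColor (j b : Fin n) : missingColor j b ≠ childColor j b := by
  rcases eq_or_ne b j with rfl | h
  · rw [missingColor, if_pos rfl, childColor_self]
    omega
  · have := Fin.val_injective.ne h
    rw [missingColor, if_neg h, childColor]
    split <;> omega

theorem eq_of_childColor_eq_of_missingColor_eq {j b j' b' : Fin n}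
    (hc : childColor j b = childColor j' b') (hm : missingColor j b = missingColor j' b') :
    j = j' ∧ b = b' := by
  have hj : j = j' := by
    have := j.isLt
    have := j'.isLt
    unfold missingColor at hm
    split at hm <;> split at hm <;> subst_vars
    · rw [childColor_self, childColor_self] at hc
      omega
    all_goals omega
  subst hj
  exact ⟨rfl, childColor_injective j hc⟩

def leafColors (j b : Fin n) : Finset ℕ :=
  ((Icc 1 (n + 2)).erase (childColor j b)).erase (missingColor j b)

theorem card_leafColors (j b : Fin n) : #(leafColors j b) = n := by
  have := mem_Icc.1 (childColor_mem j b)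
  rw [leafColors, card_erase_of_mem, card_erase_of_mem, Nat.card_Icc]
  · omega
  · simp; omega
  · simpa [missingColor_ne_childColor] using missingColor_mem j b

def leafColor (j b : Fin n) : Fin n ↪o ℕ :=
  (leafColors j b).orderEmbOfFin (card_leafColors j b)

theorem leafColor_mem (j b a : Fin n) : leafColor j b a ∈ leafColors j b :=
  orderEmbOfFin_mem _ _ a

theorem exists_leafColor_eq (j b : Fin n) {i : ℕ} (hi : i ∈ leafColors j b) :
    ∃ a, leafColor j b a = i := by
  rwa [← Set.mem_range, leafColor, range_orderEmbOfFin]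

def twoColoring : naryVertex n 2 → ℕ
  | ⟨[], _⟩ => n + 1
  | ⟨[j], _⟩ => j + 1
  | ⟨b :: j :: _, _⟩ => childColor j b

theorem vertex_two_cases (v : naryVertex n 2) :
    v = naryRoot n 2 ∨ (∃ j, v = .ofList [j] (by simp)) ∨
      ∃ b j, v = .ofList [b, j] (by simp) := by
  match v with
  | ⟨[], _⟩ => exact .inl rfl
  | ⟨[j], _⟩ => exact .inr (.inl ⟨j, rfl⟩)
  | ⟨[b, j], _⟩ => exact .inr (.inr ⟨b, j, rfl⟩)
  | ⟨_ :: _ :: _ :: _, h⟩ => simp at h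

theorem twoColoring_mem (v : naryVertex n 2) : twoColoring v ∈ Icc 1 (n + 1) := by
  match v with
  | ⟨[], _⟩ => simp [twoColoring]
  | ⟨[j], _⟩ => simp only [twoColoring, mem_Icc]; omega
  | ⟨b :: j :: _, _⟩ => exact childColor_mem j b

theorem twoColoring_apply_ne_of_adj {u v : naryVertex n 2} (h : (naryTree n 2).Adj u v) :
    twoColoring u ≠ twoColoring v := by
  refine apply_ne_of_adj_of_apply_cons_ne (fun a t ha => ?_) h
  match t, ha with
  | [], _ => simp [twoColoring]; omega
  | [j], _ => exact childColor_ne j a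

theorem hasColorfulNeighborhood_twoColoring_root :
    (naryTree n 2).HasColorfulNeighborhood twoColoring (naryRoot n 2) := by
  intro x hx
  have hi := mem_Icc.1 (twoColoring_mem x)
  change twoColoring x ≠ n + 1 at hx
  exact ⟨.ofList [⟨twoColoring x - 1, by omega⟩] (by simp), .inr ⟨_, rfl⟩, by
    change twoColoring x - 1 + 1 = twoColoring x; omega⟩

theorem hasColorfulNeighborhood_twoColoring_depthOne (j : Fin n) :
    (naryTree n 2).HasColorfulNeighborhood twoColoring (.ofList [j] (by simp)) := by
  intro x hx
  by_cases hroot : twoColoring x = n + 1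
  · exact ⟨naryRoot n 2, .inl ⟨j, rfl⟩, hroot.symm⟩
  · obtain ⟨b, hb⟩ := exists_childColor_eq j (twoColoring_mem x) hx
    exact ⟨.ofList [b, j] (by simp), .inr ⟨b, rfl⟩, hb⟩

theorem exists_colorCode_twoColoring_leaf_eq_two (hn : 2 ≤ n) (b j : Fin n) :
    ∃ i, (naryTree n 2).colorCode twoColoring (.ofList [b, j] (by simp)) i = 2 := by
  have : Nontrivial (Fin n) := Fin.nontrivial_iff_two_le.2 hn
  obtain ⟨b', hb'⟩ := exists_ne b
  have hsib : twoColoring (.ofList [b', j] (by simp)) = childColor j b' := rfl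
  refine ⟨childColor j b', ?_⟩
  rw [colorCode_eq_add_one_of_adj_iff preconnected (adj_iff_of_length_eq (k := 2) b [j] rfl) hsib
      ((childColor_injective j).ne hb'.symm),
    colorCode_eq_one (v := (.ofList [j] (by simp) : naryVertex n 2)) preconnected
      (.inr ⟨b', rfl⟩) hsib (childColor_ne j b').symm]

theorem colorCode_twoColoring_ne_of_hasColorfulNeighborhood (hn : 2 ≤ n) {v : naryVertex n 2}
    (hv : (naryTree n 2).HasColorfulNeighborhood twoColoring v) (b j : Fin n) :
    (naryTree n 2).colorCode twoColoring v ≠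
      (naryTree n 2).colorCode twoColoring (.ofList [b, j] (by simp)) := fun h => by
  obtain ⟨i, hi⟩ := exists_colorCode_twoColoring_leaf_eq_two hn b j
  have := hv.colorCode_le_one i
  rw [h, hi] at this
  omega

theorem injective_colorCode_twoColoring (hn : 2 ≤ n) :
    Function.Injective ((naryTree n 2).colorCode twoColoring) := by
  intro u v h
  wlog hle : u.1.length ≤ v.1.length generalizing u v
  · exact (this h.symm (by omega)).symm
  have hc := apply_eq_of_colorCode_eq preconnected h
  rcases vertex_two_cases u with rfl | ⟨j, rfl⟩ | ⟨b, j, rfl⟩ <;>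
    rcases vertex_two_cases v with rfl | ⟨j', rfl⟩ | ⟨b', j', rfl⟩ <;>
    simp [naryRoot] at hle
  · rfl
  · change n + 1 = j' + 1 at hc
    omega
  · exact absurd h (colorCode_twoColoring_ne_of_hasColorfulNeighborhood hn
      hasColorfulNeighborhood_twoColoring_root b' j')
  · change (j : ℕ) + 1 = j' + 1 at hc
    rw [Fin.ext (by omega : (j : ℕ) = j')]
  · exact absurd h (colorCode_twoColoring_ne_of_hasColorfulNeighborhood hn
      (hasColorfulNeighborhood_twoColoring_depthOne j) b' j')
  · change childColor j b = childColor j' b' at hc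
    have hj := eq_of_colorCode_eq_one (adj_iff_of_length_eq (k := 2) b [j] rfl)
      (h ▸ colorCode_eq_one preconnected (adj_cons b' [j'] _) rfl (childColor_ne j' b'))
    change (j : ℕ) + 1 = j' + 1 at hj
    obtain rfl : j = j' := Fin.ext (by omega)
    rw [childColor_injective j hc]

theorem isLocatingColoring_twoColoring (hn : 2 ≤ n) :
    IsLocatingColoring (naryTree n 2) (n + 1) twoColoring :=
  ⟨twoColoring_mem, fun _ _ => twoColoring_apply_ne_of_adj, injective_colorCode_twoColoring hn⟩

def threeColoring : naryVertex n 3 → ℕ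
  | ⟨[], _⟩ => n + 2
  | ⟨[j], _⟩ => j + 1
  | ⟨[b, j], _⟩ => childColor j b
  | ⟨a :: b :: j :: _, _⟩ => leafColor j b a

theorem vertex_three_cases (v : naryVertex n 3) :
    v = naryRoot n 3 ∨ (∃ j, v = .ofList [j] (by simp)) ∨
      (∃ b j, v = .ofList [b, j] (by simp)) ∨ ∃ a b j, v = .ofList [a, b, j] (by simp) := by
  match v with
  | ⟨[], _⟩ => exact .inl rfl
  | ⟨[j], _⟩ => exact .inr (.inl ⟨j, rfl⟩)
  | ⟨[b, j], _⟩ => exact .inr (.inr (.inl ⟨b, j, rfl⟩))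
  | ⟨[a, b, j], _⟩ => exact .inr (.inr (.inr ⟨a, b, j, rfl⟩))
  | ⟨_ :: _ :: _ :: _ :: _, h⟩ => exact absurd h (by simp)

theorem leafColor_ne_childColor (j b a : Fin n) : leafColor j b a ≠ childColor j b :=
  ne_of_mem_erase (mem_of_mem_erase (leafColor_mem j b a))

theorem leafColor_ne_missingColor (j b a : Fin n) : leafColor j b a ≠ missingColor j b :=
  ne_of_mem_erase (leafColor_mem j b a)

theorem threeColoring_mem (v : naryVertex n 3) : threeColoring v ∈ Icc 1 (n + 2) := by
  match v with
  | ⟨[], _⟩ => simp [threeColoring]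
  | ⟨[j], _⟩ => simp only [threeColoring, mem_Icc]; omega
  | ⟨[b, j], _⟩ =>
    have := mem_Icc.1 (childColor_mem j b)
    simp only [threeColoring, mem_Icc]
    omega
  | ⟨a :: b :: j :: _, _⟩ => exact mem_of_mem_erase (mem_of_mem_erase (leafColor_mem j b a))

theorem threeColoring_apply_ne_of_adj {u v : naryVertex n 3} (h : (naryTree n 3).Adj u v) :
    threeColoring u ≠ threeColoring v := by
  refine apply_ne_of_adj_of_apply_cons_ne (fun a t ha => ?_) h
  match t, ha with
  | [], _ => simp only [threeColoring]; omega
  | [j], _ => exact childColor_ne j a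
  | [b, j], _ => exact leafColor_ne_childColor j b a

theorem exists_threeColoring_eq_missingColor (b j : Fin n) :
    ∃ x, threeColoring x = missingColor j b ∧
      (naryTree n 3).dist (.ofList [b, j] (by simp)) x ≤ 2 := by
  have hup := adj_cons (k := 3) b [j] (by simp)
  by_cases hbj : b = j
  · exact ⟨naryRoot n 3, by simp [threeColoring, naryRoot, missingColor, hbj],
      dist_le_two hup (adj_cons j [] (by simp))⟩
  · exact ⟨.ofList [j, j] (by simp), by simp [threeColoring, missingColor, hbj, childColor_self],
      dist_le_two hup (adj_cons j [j] (by simp)).symm⟩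

theorem hasColorfulNeighborhood_threeColoring_depthOne (j : Fin n) :
    (naryTree n 3).HasColorfulNeighborhood threeColoring (.ofList [j] (by simp)) := by
  intro x hx
  by_cases hroot : threeColoring x = n + 2
  · exact ⟨naryRoot n 3, .inl ⟨j, rfl⟩, hroot.symm⟩
  · obtain ⟨b, hb⟩ := exists_childColor_eq j
      (by have := mem_Icc.1 (threeColoring_mem x); rw [mem_Icc]; omega) hx
    exact ⟨.ofList [b, j] (by simp), .inr ⟨b, rfl⟩, hb⟩

theorem colorCode_threeColoring_root_le_two (hn : 0 < n) (i : ℕ) :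
    (naryTree n 3).colorCode threeColoring (naryRoot n 3) i ≤ 2 :=
  (colorCode_le_colorCode_add_one (adj_cons (k := 3) ⟨0, hn⟩ [] (by simp)).symm i).trans
    (Nat.succ_le_succ ((hasColorfulNeighborhood_threeColoring_depthOne _).colorCode_le_one i))

theorem colorCode_threeColoring_depthTwo_le_one {b j : Fin n} {i : ℕ}
    (hi : i ≠ missingColor j b) :
    (naryTree n 3).colorCode threeColoring (.ofList [b, j] (by simp)) i ≤ 1 := by
  by_cases hused : ∃ x : naryVertex n 3, threeColoring x = i
  · obtain ⟨x, rfl⟩ := hused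
    by_cases hself : threeColoring x = childColor j b
    · rw [hself]
      exact (colorCode_self (v := (.ofList [b, j] (by simp) : naryVertex n 3))).trans_le zero_le_one
    by_cases hup : threeColoring x = j + 1
    · exact (colorCode_le (x := .ofList [j] (by simp)) hup.symm).trans
        (dist_eq_one_iff_adj.2 (adj_cons b [j] _)).le
    · obtain ⟨a, ha⟩ := exists_leafColor_eq j b
        (mem_erase.2 ⟨hi, mem_erase.2 ⟨hself, threeColoring_mem x⟩⟩)
      exact (colorCode_le (x := .ofList [a, b, j] (by simp)) ha).trans
        (dist_eq_one_iff_adj.2 (adj_cons a [b, j] _).symm).le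
  · rw [colorCode_eq_zero_of_forall_ne (not_exists.1 hused)]
    exact zero_le_one

theorem colorCode_threeColoring_depthTwo_missingColor (b j : Fin n) :
    (naryTree n 3).colorCode threeColoring (.ofList [b, j] (by simp)) (missingColor j b) = 2 := by
  obtain ⟨x, hx, hdist⟩ := exists_threeColoring_eq_missingColor b j
  refine colorCode_eq hx hdist fun y hy => ?_
  rcases eq_or_adj_of_dist_lt_two preconnected hy with rfl | hadj
  · exact (missingColor_ne_childColor j b).symm
  · obtain ⟨l, hl⟩ := y
    rcases adj_ofList_cons_iff.1 hadj with rfl | ⟨a, rfl⟩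
    · exact (missingColor_ne j b).symm
    · exact leafColor_ne_missingColor j b a

theorem colorCode_threeColoring_le_two (hn : 0 < n) {v : naryVertex n 3} (hv : v.1.length ≤ 2)
    (i : ℕ) : (naryTree n 3).colorCode threeColoring v i ≤ 2 := by
  rcases vertex_three_cases v with rfl | ⟨j, rfl⟩ | ⟨b, j, rfl⟩ | ⟨a, b, j, rfl⟩
  · exact colorCode_threeColoring_root_le_two hn i
  · exact ((hasColorfulNeighborhood_threeColoring_depthOne j).colorCode_le_one i).trans one_le_two
  · by_cases hi : i = missingColor j b
    · rw [hi, colorCode_threeColoring_depthTwo_missingColor]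
    · exact (colorCode_threeColoring_depthTwo_le_one hi).trans one_le_two
  · simp at hv

theorem colorCode_threeColoring_leaf_missingColor (a b j : Fin n) :
    (naryTree n 3).colorCode threeColoring (.ofList [a, b, j] (by simp)) (missingColor j b) =
      3 := by
  obtain ⟨x, hx, -⟩ := exists_threeColoring_eq_missingColor b j
  rw [colorCode_eq_add_one_of_adj_iff preconnected (adj_iff_of_length_eq (k := 3) a [b, j] rfl) hx
    (leafColor_ne_missingColor j b a), colorCode_threeColoring_depthTwo_missingColor]

theorem colorCode_threeColoring_leaf_le_two {a b j : Fin n} {i : ℕ}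
    (hi : i ≠ missingColor j b) :
    (naryTree n 3).colorCode threeColoring (.ofList [a, b, j] (by simp)) i ≤ 2 :=
  (colorCode_le_colorCode_add_one (adj_cons a [b, j] _) i).trans
    (Nat.succ_le_succ (colorCode_threeColoring_depthTwo_le_one hi))

theorem colorCode_threeColoring_ne_leaf (hn : 0 < n) {v : naryVertex n 3} (hv : v.1.length ≤ 2)
    (a b j : Fin n) :
    (naryTree n 3).colorCode threeColoring v ≠
      (naryTree n 3).colorCode threeColoring (.ofList [a, b, j] (by simp)) := fun h => by
  have := colorCode_threeColoring_le_two hn hv (missingColor j b)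
  rw [h, colorCode_threeColoring_leaf_missingColor] at this
  omega

theorem eq_of_colorCode_threeColoring_depthTwo_eq {b j b' j' : Fin n}
    (h : (naryTree n 3).colorCode threeColoring (.ofList [b, j] (by simp)) =
      (naryTree n 3).colorCode threeColoring (.ofList [b', j'] (by simp))) :
    b = b' ∧ j = j' := by
  have hc : childColor j b = childColor j' b' := apply_eq_of_colorCode_eq preconnected h
  have hm : missingColor j' b' = missingColor j b := by
    by_contra hne
    have := colorCode_threeColoring_depthTwo_le_one hne
    rw [h, colorCode_threeColoring_depthTwo_missingColor] at this
    omega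
  exact (eq_of_childColor_eq_of_missingColor_eq hc hm.symm).symm

theorem eq_of_colorCode_threeColoring_leaf_eq {a b j a' b' j' : Fin n}
    (h : (naryTree n 3).colorCode threeColoring (.ofList [a, b, j] (by simp)) =
      (naryTree n 3).colorCode threeColoring (.ofList [a', b', j'] (by simp))) :
    a = a' ∧ b = b' ∧ j = j' := by
  have hc : leafColor j b a = leafColor j' b' a' := apply_eq_of_colorCode_eq preconnected h
  have hcc := eq_of_colorCode_eq_one (adj_iff_of_length_eq (k := 3) a [b, j] rfl)
    (h ▸ colorCode_eq_one preconnected (adj_cons a' [b', j'] _) rfl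
      (leafColor_ne_childColor j' b' a'))
  change childColor j b = childColor j' b' at hcc
  have hm : missingColor j' b' = missingColor j b := by
    by_contra hne
    have := colorCode_threeColoring_leaf_le_two (a := a) hne
    rw [h, colorCode_threeColoring_leaf_missingColor] at this
    omega
  obtain ⟨rfl, rfl⟩ := eq_of_childColor_eq_of_missingColor_eq hcc hm.symm
  exact ⟨(leafColor j b).injective hc, rfl, rfl⟩

theorem injective_colorCode_threeColoring (hn : 0 < n) :
    Function.Injective ((naryTree n 3).colorCode threeColoring) := by
  intro u v h
  wlog hle : u.1.length ≤ v.1.length generalizing u v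
  · exact (this h.symm (by omega)).symm
  have hc := apply_eq_of_colorCode_eq preconnected h
  rcases vertex_three_cases u with rfl | ⟨j, rfl⟩ | ⟨b, j, rfl⟩ | ⟨a, b, j, rfl⟩ <;>
    rcases vertex_three_cases v with
      rfl | ⟨j', rfl⟩ | ⟨b', j', rfl⟩ | ⟨a', b', j', rfl⟩ <;>
    simp [naryRoot] at hle
  · rfl
  · change n + 2 = j' + 1 at hc
    omega
  · change n + 2 = childColor j' b' at hc
    have := mem_Icc.1 (childColor_mem j' b')
    omega
  · exact absurd h (colorCode_threeColoring_ne_leaf hn (by simp [naryRoot]) a' b' j')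
  · change (j : ℕ) + 1 = j' + 1 at hc
    rw [Fin.ext (by omega : (j : ℕ) = j')]
  · have := (hasColorfulNeighborhood_threeColoring_depthOne j).colorCode_le_one
      (missingColor j' b')
    rw [h, colorCode_threeColoring_depthTwo_missingColor] at this
    omega
  · exact absurd h (colorCode_threeColoring_ne_leaf hn (by simp) a' b' j')
  · obtain ⟨rfl, rfl⟩ := eq_of_colorCode_threeColoring_depthTwo_eq h
    rfl
  · exact absurd h (colorCode_threeColoring_ne_leaf hn (by simp) a' b' j')
  · obtain ⟨rfl, rfl, rfl⟩ := eq_of_colorCode_threeColoring_leaf_eq h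
    rfl

theorem isLocatingColoring_threeColoring (hn : 0 < n) :
    IsLocatingColoring (naryTree n 3) (n + 2) threeColoring :=
  ⟨threeColoring_mem, fun _ _ => threeColoring_apply_ne_of_adj,
    injective_colorCode_threeColoring hn⟩

end naryTree

/-- For every integer `n ≥ 2` and `k ∈ {2, 3}`, the locating chromatic number of the
complete `n`-ary tree `T(n,k)` equals `n + k - 1`. -/
theorem locatingChromatic_naryTree_depth_two_three (n k : ℕ) (hn : 2 ≤ n)
    (hk : k = 2 ∨ k = 3) :
    locatingChromaticNumber (naryTree n k) = n + k - 1 := by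
  rcases hk with rfl | rfl
  · exact locatingChromaticNumber_eq ⟨_, naryTree.isLocatingColoring_twoColoring hn⟩
      fun _ _ hc => naryTree.succ_le_of_isLocatingColoring hc [⟨0, by omega⟩] rfl
  · exact locatingChromaticNumber_eq ⟨_, naryTree.isLocatingColoring_threeColoring (by omega)⟩
      fun _ _ hc => naryTree.add_two_le_of_isLocatingColoring hn hc [] rfl
end

section
/- If G is a connected simple graph containing a vertex adjacent to k leaves (vertices of degree 1), then the locating chromatic number of G satisfies χ_L(G) ≥ k + 1. -/
/-!
Two leaves hanging at the same vertex `v` are at the same distance from every other vertex,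
namely one more than `v` is. So if they had the same color they would have the same color
code. Hence a locating coloring is injective on `v` together with its `k` leaves, which needs
`k + 1` colors.
-/

open Finset SimpleGraph

section

variable {V : Type*} {G : SimpleGraph V}

/-- `x` is a leaf whose only neighbor is `v`. -/
def IsLeafAt (G : SimpleGraph V) (v x : V) : Prop :=
  G.Adj v x ∧ ∃! w, G.Adj x w

lemma IsLeafAt.eq_of_adj {v x u : V} (hx : IsLeafAt G v x) (hu : G.Adj x u) : u = v :=
  hx.2.unique hu hx.1.symm

lemma IsLeafAt.dist_eq_add_one (hG : G.Connected) {v x w : V} (hx : IsLeafAt G v x)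
    (hw : w ≠ x) : G.dist x w = G.dist v w + 1 := by
  apply le_antisymm
  · calc G.dist x w ≤ G.dist x v + G.dist v w := hG.dist_triangle
      _ = G.dist v w + 1 := by rw [dist_eq_one_iff_adj.mpr hx.1.symm, add_comm]
  · obtain ⟨p, hp⟩ := (hG.preconnected x w).exists_walk_length_eq_dist
    cases p with
    | nil => exact absurd rfl hw
    | cons hxu q =>
      obtain rfl := hx.eq_of_adj hxu
      rw [← hp, Walk.length_cons]
      exact Nat.succ_le_succ (dist_le q)

/-- The distance `d(v, C_i)` from `v` to the color class `C_i`; it is `0` if `C_i` is empty. -/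
noncomputable def colorDist (G : SimpleGraph V) (c : V → ℕ) (v : V) (i : ℕ) : ℕ :=
  sInf {d : ℕ | ∃ x, c x = i ∧ G.dist v x = d}

lemma colorDist_self (c : V → ℕ) (v : V) : colorDist G c v (c v) = 0 :=
  Nat.sInf_eq_zero.mpr (.inl ⟨v, rfl, dist_self⟩)

lemma colorDist_of_injective {c : V → ℕ} (hc : Function.Injective c) (v w : V) :
    colorDist G c v (c w) = G.dist v w := by
  have hclass : {d : ℕ | ∃ x, c x = c w ∧ G.dist v x = d} = {G.dist v w} := by
    ext d
    simp [hc.eq_iff, eq_comm]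
  rw [colorDist, hclass, csInf_singleton]

lemma colorDist_eq_of_isLeafAt (hG : G.Connected) {c : V → ℕ} {v x y : V}
    (hx : IsLeafAt G v x) (hy : IsLeafAt G v y) (hxy : c x = c y) :
    colorDist G c x = colorDist G c y := by
  funext i
  by_cases hi : i = c x
  · rw [hi, colorDist_self, hxy, colorDist_self]
  · have hclass : ∀ w, c w = i → G.dist x w = G.dist y w := by
      rintro w rfl
      rw [hx.dist_eq_add_one hG (by rintro rfl; exact hi rfl),
        hy.dist_eq_add_one hG (by rintro rfl; exact hi hxy.symm)]
    unfold colorDist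
    congr 1
    ext d
    exact exists_congr fun w => and_congr_right fun hw => by rw [hclass w hw]

namespace IsLocatingColoring

variable {m : ℕ} {c : V → ℕ}

lemma injective_colorDist (hc : IsLocatingColoring G m c) : Function.Injective (colorDist G c) :=
  hc.2.2

lemma card_le_of_injOn (hc : IsLocatingColoring G m c) {t : Finset V}
    (ht : Set.InjOn c t) : #t ≤ m := by
  simpa using card_le_card_of_injOn c (fun a _ => hc.1 a) ht

lemma injOn_insert_leaves [DecidableEq V] (hc : IsLocatingColoring G m c) (hG : G.Connected) {v : V}
    {s : Finset V} (hs : ∀ x ∈ s, IsLeafAt G v x) : Set.InjOn c (insert v s : Finset V) := by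
  intro a ha b hb hab
  simp only [coe_insert, Set.mem_insert_iff, mem_coe] at ha hb
  rcases ha with rfl | ha <;> rcases hb with rfl | hb
  · rfl
  · exact absurd hab (hc.2.1 a b (hs b hb).1)
  · exact absurd hab.symm (hc.2.1 b a (hs a ha).1)
  · exact hc.injective_colorDist (colorDist_eq_of_isLeafAt hG (hs a ha) (hs b hb) hab)

end IsLocatingColoring

lemma isLocatingColoring_of_injective (hG : G.Connected) {m : ℕ} {c : V → ℕ}
    (hrange : ∀ v, c v ∈ Icc 1 m) (hc : Function.Injective c) : IsLocatingColoring G m c := by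
  refine ⟨hrange, fun u v huv => hc.ne huv.ne, fun a b (hab : colorDist G c a = colorDist G c b) => ?_⟩
  have hcode := congrFun hab (c a)
  rw [colorDist_self, colorDist_of_injective hc] at hcode
  exact (hG.dist_eq_zero_iff.mp hcode.symm).symm

lemma exists_isLocatingColoring [Fintype V] (hG : G.Connected) :
    ∃ m, ∃ c : V → ℕ, IsLocatingColoring G m c := by
  let e := Fintype.equivFin V
  refine ⟨Fintype.card V, fun w => e w + 1, isLocatingColoring_of_injective hG ?_ ?_⟩
  · intro w
    simp
  · intro a b hab
    exact e.injective (Fin.ext (Nat.succ_injective hab))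

end

/-- If a connected graph `G` contains a vertex adjacent to `k` leaves (vertices of
degree `1`, i.e. with a unique neighbor), then `χ_L(G) ≥ k + 1`. -/
theorem locatingChromatic_ge_of_leaves {V : Type*} [Fintype V] (G : SimpleGraph V)
    (hG : G.Connected) (k : ℕ) (v : V) (s : Finset V) (hcard : s.card = k)
    (hs : ∀ x ∈ s, G.Adj v x ∧ (∃! w, G.Adj x w)) :
    k + 1 ≤ locatingChromaticNumber G := by
  classical
  obtain ⟨m₀, c₀, hc₀⟩ := exists_isLocatingColoring hG
  refine le_csInf ⟨m₀, c₀, hc₀⟩ ?_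
  rintro m ⟨c, hc⟩
  have hv : v ∉ s := fun h => (hs v h).1.ne rfl
  calc k + 1 = #(insert v s) := by rw [card_insert_of_notMem hv, hcard]
    _ ≤ m := hc.card_le_of_injOn (hc.injOn_insert_leaves hG hs)
end

section
/- For every fixed integer n ≥ 3, χ_L(T(n,k)) = o(k) as k → ∞; that is, the limit as k → ∞ of χ_L(T(n,k)) / k equals 0 (equivalently: for every ε > 0 there is an integer K such that k > K implies χ_L(T(n,k)) / k < ε). -/
/-!
Fix a block length `t`. The root is the only vertex of color `1`, so `d(v, C_1)` is the depth
of `v`, and it remains to separate two vertices `u ≠ v` of the same depth `j` whose root paths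
first differ at depth `s + 1`.

For each class `P < k / t` there is a color whose members ("beacons") are the words `m ++ w`
where `m` has length `L ≈ log_n k` and spells `P` in base `n`, and `w` sits at depth
`(P + 1) t + (2 L + 1) · e`, `e` being the base-`n` value of the `P`-th block of `t` letters
of `w`. For a deep vertex `z` the nearest beacon of class `P` is at distance
`j - (P + 1) t - (2 L + 1) e(z) ± L`, which recovers the `P`-th block of the root path of `z`.
This separates `u` and `v` when `s` lies at least `T ≈ t + (2 L + 1) n ^ t + L` above them.

All other vertices are colored by their lowest letter and their depth modulo `2 T`. When the
first difference lies less than `T` above `u` and `v`, the color of the depth-`(s + 1)` ancestor of `v` is at distance exactly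
`j - s - 1` from `v`, whereas from `u` only `u`'s own ancestor at that depth would be that
close, and it is a sibling of `v`'s ancestor, hence has another color.

This locating coloring uses `k / t + O_{n,t}(log k)` colors, so
`χ_L(T(n,k)) / k ≤ 1 / t + o(1)` for every `t`.
-/

open Filter Topology

namespace List

variable {α : Type*}

theorem length_rtake (l : List α) (s : ℕ) : (l.rtake s).length = min s l.length := by
  simp only [rtake, length_drop]
  omega

theorem rtake_length_self (l : List α) : l.rtake l.length = l := by
  simp [rtake]

theorem rtake_rtake {l : List α} {m s : ℕ} (h : m ≤ s) : (l.rtake s).rtake m = l.rtake m := by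
  simp only [rtake, length_drop, drop_drop]
  congr 1
  omega

theorem rtake_append_of_le_length {l₁ l₂ : List α} {s : ℕ} (h : s ≤ l₂.length) :
    (l₁ ++ l₂).rtake s = l₂.rtake s := by
  simp only [rtake, length_append]
  rw [show l₁.length + l₂.length - s = l₁.length + (l₂.length - s) by omega, drop_append]
  simp

theorem rtake_cons_of_le_length (a : α) {l : List α} {s : ℕ} (h : s ≤ l.length) :
    (a :: l).rtake s = l.rtake s :=
  rtake_append_of_le_length (l₁ := [a]) h

theorem exists_rtake_succ_eq_cons {l : List α} {s : ℕ} (h : s < l.length) :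
    ∃ b, l.rtake (s + 1) = b :: l.rtake s := by
  refine ⟨l[l.length - (s + 1)], ?_⟩
  simp only [rtake]
  rw [show l.length - s = l.length - (s + 1) + 1 by omega]
  exact (drop_eq_getElem_cons _).trans rfl

section CommonSuffix

variable [DecidableEq α]

def commonSuffixLength (l₁ l₂ : List α) : ℕ :=
  Nat.findGreatest (fun s => l₁.rtake s = l₂.rtake s) (min l₁.length l₂.length)

variable {l₁ l₂ : List α} {s : ℕ}

theorem commonSuffixLength_le_left : l₁.commonSuffixLength l₂ ≤ l₁.length :=
  Nat.findGreatest_le _ |>.trans (min_le_left _ _)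

theorem commonSuffixLength_le_right : l₁.commonSuffixLength l₂ ≤ l₂.length :=
  Nat.findGreatest_le _ |>.trans (min_le_right _ _)

theorem rtake_commonSuffixLength :
    l₁.rtake (l₁.commonSuffixLength l₂) = l₂.rtake (l₁.commonSuffixLength l₂) :=
  Nat.findGreatest_spec (P := fun s => l₁.rtake s = l₂.rtake s) (Nat.zero_le _) (by simp)

theorem le_commonSuffixLength (h₁ : s ≤ l₁.length) (h₂ : s ≤ l₂.length)
    (h : l₁.rtake s = l₂.rtake s) : s ≤ l₁.commonSuffixLength l₂ :=
  Nat.le_findGreatest (le_min h₁ h₂) h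

theorem commonSuffixLength_self (l : List α) : l.commonSuffixLength l = l.length :=
  le_antisymm commonSuffixLength_le_left (le_commonSuffixLength le_rfl le_rfl rfl)

theorem commonSuffixLength_le_cons (a : α) :
    l₁.commonSuffixLength l₂ ≤ (a :: l₁).commonSuffixLength l₂ := by
  have h := commonSuffixLength_le_left (l₁ := l₁) (l₂ := l₂)
  refine le_commonSuffixLength (by simp; omega) commonSuffixLength_le_right ?_
  rw [← rtake_commonSuffixLength, rtake_cons_of_le_length a h]

theorem commonSuffixLength_cons_le (a : α) :
    (a :: l₁).commonSuffixLength l₂ ≤ l₁.commonSuffixLength l₂ + 1 := by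
  have h₁ : (a :: l₁).commonSuffixLength l₂ - 1 ≤ l₁.length := by
    have := commonSuffixLength_le_left (l₁ := a :: l₁) (l₂ := l₂)
    simp only [length_cons] at this
    omega
  have h₂ := Nat.sub_le ((a :: l₁).commonSuffixLength l₂) 1
  suffices (a :: l₁).commonSuffixLength l₂ - 1 ≤ l₁.commonSuffixLength l₂ by omega
  refine le_commonSuffixLength h₁ (h₂.trans commonSuffixLength_le_right) ?_
  calc l₁.rtake _ = (a :: l₁).rtake _ := (rtake_cons_of_le_length a h₁).symm
    _ = ((a :: l₁).rtake _).rtake _ := (rtake_rtake h₂).symm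
    _ = (l₂.rtake _).rtake _ := by rw [rtake_commonSuffixLength]
    _ = l₂.rtake _ := rtake_rtake h₂

end CommonSuffix

end List

namespace SimpleGraph

variable {V : Type*} {G : SimpleGraph V}

theorem Walk.sub_le_length (f : V → ℤ) (hf : ∀ v w, G.Adj v w → f v ≤ f w + 1) {u v : V}
    (p : G.Walk u v) : f u - f v ≤ p.length := by
  induction p with
  | nil => simp
  | cons h p ih =>
    have := hf _ _ h
    rw [Walk.length_cons]
    push_cast
    omega

theorem Reachable.sub_le_dist (f : V → ℤ) (hf : ∀ v w, G.Adj v w → f v ≤ f w + 1) {u v : V}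
    (h : G.Reachable u v) : f u - f v ≤ G.dist u v := by
  obtain ⟨p, hp⟩ := h.exists_walk_length_eq_dist
  exact hp ▸ p.sub_le_length f hf

/-- `d(v, C_i)` for the coloring `c`. -/
noncomputable def colorClassDist (G : SimpleGraph V) (c : V → ℕ) (v : V) (i : ℕ) : ℕ :=
  sInf {d : ℕ | ∃ x, c x = i ∧ G.dist v x = d}

variable {c : V → ℕ} {v x : V} {i d : ℕ}

theorem colorClassDist_le (hx : c x = i) : G.colorClassDist c v i ≤ G.dist v x :=
  Nat.sInf_le ⟨x, hx, rfl⟩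

theorem exists_colorClassDist_eq (hx : c x = i) :
    ∃ y, c y = i ∧ G.dist v y = G.colorClassDist c v i :=
  Nat.sInf_mem (s := {d : ℕ | ∃ x, c x = i ∧ G.dist v x = d}) ⟨_, x, hx, rfl⟩

theorem le_colorClassDist (hx : c x = i) (h : ∀ y, c y = i → d ≤ G.dist v y) :
    d ≤ G.colorClassDist c v i := by
  obtain ⟨y, hy, hyd⟩ := exists_colorClassDist_eq (G := G) (v := v) hx
  exact hyd ▸ h y hy

end SimpleGraph

open SimpleGraph List

section Geometry

variable {n k : ℕ}

theorem naryTree_adj_cons {a : Fin n} {l : List (Fin n)} (h : (a :: l).length ≤ k) :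
    (naryTree n k).Adj ⟨a :: l, h⟩ ⟨l, (Nat.le_succ _).trans h⟩ :=
  Or.inl ⟨a, rfl⟩

theorem naryTree_reachable_root :
    ∀ (l : List (Fin n)) (hl : l.length ≤ k), (naryTree n k).Reachable ⟨l, hl⟩ (naryRoot n k)
  | [], _ => .refl _
  | _ :: l, hl => (naryTree_adj_cons hl).reachable.trans (naryTree_reachable_root l _)

theorem naryTree_connected : (naryTree n k).Connected where
  preconnected u v :=
    (naryTree_reachable_root u.1 u.2).trans (naryTree_reachable_root v.1 v.2).symm
  nonempty := ⟨naryRoot n k⟩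

theorem naryTree_dist_drop_le :
    ∀ (l : List (Fin n)) (hl : l.length ≤ k) (i : ℕ) (hi : (l.drop i).length ≤ k),
      (naryTree n k).dist ⟨l, hl⟩ ⟨l.drop i, hi⟩ ≤ i
  | [], _, _, _ => by
    simp only [drop_nil]
    exact (le_of_eq SimpleGraph.dist_self).trans (Nat.zero_le _)
  | _ :: _, _, 0, _ => le_of_eq SimpleGraph.dist_self
  | a :: l, hl, i + 1, hi => calc
      _ ≤ (naryTree n k).dist ⟨a :: l, hl⟩ ⟨l, _⟩ + (naryTree n k).dist ⟨l, _⟩ ⟨l.drop i, hi⟩ :=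
        naryTree_connected.dist_triangle
      _ ≤ 1 + i := add_le_add (dist_eq_one_iff_adj.2 (naryTree_adj_cons hl)).le
        (naryTree_dist_drop_le l _ i hi)
      _ = i + 1 := add_comm 1 i

/-- The ancestor of `v` at depth `s` (not `s` levels up). -/
def naryAncestor (v : naryVertex n k) (s : ℕ) : naryVertex n k :=
  ⟨v.1.rtake s, by rw [length_rtake]; exact (min_le_right _ _).trans v.2⟩

theorem naryTree_dist_ancestor_le (v : naryVertex n k) (s : ℕ) :
    (naryTree n k).dist v (naryAncestor v s) ≤ v.1.length - s :=
  naryTree_dist_drop_le v.1 v.2 _ _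

theorem naryTree_dist_add_two_mul (u v : naryVertex n k) :
    (naryTree n k).dist u v + 2 * u.1.commonSuffixLength v.1 = u.1.length + v.1.length := by
  set s := u.1.commonSuffixLength v.1
  have hsu : s ≤ u.1.length := commonSuffixLength_le_left
  have hsv : s ≤ v.1.length := commonSuffixLength_le_right
  apply le_antisymm
  · have hanc : naryAncestor u s = naryAncestor v s := Subtype.ext rtake_commonSuffixLength
    have htri := naryTree_connected.dist_triangle (u := u) (v := naryAncestor u s) (w := v)
    have hu := naryTree_dist_ancestor_le u s
    have hv := naryTree_dist_ancestor_le v s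
    rw [← hanc] at hv
    rw [SimpleGraph.dist_comm (u := naryAncestor u s)] at htri
    omega
  · -- `p ↦ |p| - 2 · csl(p, v)` changes by at most one along an edge
    have hlip := (naryTree_connected.preconnected u v).sub_le_dist
      (fun p => (p.1.length : ℤ) - 2 * p.1.commonSuffixLength v.1) (by
        rintro p q (⟨a, ha⟩ | ⟨a, ha⟩)
        · have := commonSuffixLength_le_cons (l₂ := v.1) a (l₁ := q.1)
          simp only [ha, length_cons]
          push_cast
          omega
        · have := commonSuffixLength_cons_le (l₂ := v.1) a (l₁ := p.1)
          simp only [ha, length_cons]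
          push_cast
          omega)
    simp only [commonSuffixLength_self] at hlip
    omega

theorem naryTree_length_sub_commonSuffixLength_le_dist (z x : naryVertex n k) :
    z.1.length - z.1.commonSuffixLength x.1 ≤ (naryTree n k).dist z x := by
  have := naryTree_dist_add_two_mul z x
  have : z.1.commonSuffixLength x.1 ≤ x.1.length := commonSuffixLength_le_right
  omega

theorem naryTree_length_sub_length_le_dist (z x : naryVertex n k) :
    z.1.length - x.1.length ≤ (naryTree n k).dist z x := by
  have := naryTree_length_sub_commonSuffixLength_le_dist z x
  have : z.1.commonSuffixLength x.1 ≤ x.1.length := commonSuffixLength_le_right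
  omega

theorem naryTree_eq_rtake_of_dist_eq {z x : naryVertex n k} (hle : x.1.length ≤ z.1.length)
    (h : (naryTree n k).dist z x = z.1.length - x.1.length) : x.1 = z.1.rtake x.1.length := by
  have hd := naryTree_dist_add_two_mul z x
  have hs : z.1.commonSuffixLength x.1 = x.1.length := by omega
  have := rtake_commonSuffixLength (l₁ := z.1) (l₂ := x.1)
  rw [hs, rtake_length_self] at this
  exact this.symm

theorem naryTree_dist_root (z : naryVertex n k) :
    (naryTree n k).dist z (naryRoot n k) = z.1.length := by
  have := naryTree_dist_add_two_mul z (naryRoot n k)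
  have : z.1.commonSuffixLength [] ≤ 0 := commonSuffixLength_le_right
  simp only [naryRoot, length_nil] at *
  omega

theorem naryTree_dist_ancestor (z : naryVertex n k) {s : ℕ} (hs : s ≤ z.1.length) :
    (naryTree n k).dist z (naryAncestor z s) = z.1.length - s := by
  have hd := naryTree_dist_add_two_mul z (naryAncestor z s)
  have hlen : (z.1.rtake s).length = s := by rw [length_rtake]; omega
  have : z.1.commonSuffixLength (z.1.rtake s) = s :=
    le_antisymm (commonSuffixLength_le_right.trans hlen.le)
      (le_commonSuffixLength hs hlen.ge (rtake_rtake le_rfl).symm)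
  change _ + 2 * z.1.commonSuffixLength (z.1.rtake s) = _ + (z.1.rtake s).length at hd
  omega

end Geometry

namespace NaryTreeColoring

section Words

variable {n : ℕ}

def enc (l : List (Fin n)) : ℕ := Nat.ofDigits n (l.map Fin.val)

theorem enc_cons (a : Fin n) (l : List (Fin n)) : enc (a :: l) = a + n * enc l := by
  simp [enc, Nat.ofDigits_cons]

theorem enc_lt (hn : 1 < n) (l : List (Fin n)) : enc l < n ^ l.length := by
  simpa [enc] using Nat.ofDigits_lt_base_pow_length hn (l := l.map Fin.val) (by simp)

theorem enc_injective (hn : 1 < n) {l₁ l₂ : List (Fin n)} (h : l₁.length = l₂.length)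
    (he : enc l₁ = enc l₂) : l₁ = l₂ :=
  List.map_injective_iff.2 Fin.val_injective
    (Nat.ofDigits_inj_of_len_eq hn (by simpa) (by simp) (by simp) he)

theorem exists_length_eq_enc_eq : ∀ {L P : ℕ}, P < n ^ L →
    ∃ m : List (Fin n), m.length = L ∧ enc m = P
  | 0, P, h => ⟨[], rfl, by simp only [pow_zero, Nat.lt_one_iff] at h; simp [enc, h]⟩
  | L + 1, P, h => by
    have hn : 0 < n := Nat.pos_of_ne_zero (by rintro rfl; simp at h)
    obtain ⟨m, hm, he⟩ :=
      exists_length_eq_enc_eq (L := L) (P := P / n) (Nat.div_lt_of_lt_mul (pow_succ' n L ▸ h))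
    refine ⟨⟨P % n, Nat.mod_lt _ hn⟩ :: m, by simp [hm], ?_⟩
    rw [enc_cons, he]
    exact Nat.mod_add_div P n

end Words

variable {n : ℕ} (t L k : ℕ)

/-- The letters at depths `P t + 1, …, (P + 1) t`. -/
def block (P : ℕ) (l : List (Fin n)) : List (Fin n) := (l.rtake ((P + 1) * t)).take t

/-- The depth of `w` in a beacon `m ++ w` of class `P`. The factor `2 L + 1` exceeds the
uncertainty `± L` with which distances to the class recover this depth. -/
def target (P : ℕ) (l : List (Fin n)) : ℕ := (P + 1) * t + (2 * L + 1) * enc (block t P l)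

/-- A beacon of class `enc (x.take L)`. -/
def IsBeacon (x : List (Fin n)) : Prop :=
  L ≤ x.length ∧ enc (x.take L) < k / t ∧
    (x.drop L).length = target t L (enc (x.take L)) (x.drop L)

def modulus (n t L : ℕ) : ℕ := 2 * (t + (2 * L + 1) * n ^ t + L)

noncomputable def treeColor : List (Fin n) → ℕ
  | [] => 1
  | a :: l =>
    open Classical in
    if IsBeacon t L k (a :: l) then 2 + enc ((a :: l).take L)
    else 2 + k / t + (modulus n t L * a + (l.length + 1) % modulus n t L)

noncomputable def vertexColor (v : naryVertex n k) : ℕ := treeColor t L k v.1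

variable {t L k}

theorem modulus_pos (hL : 1 ≤ L) : 0 < modulus n t L := by
  unfold modulus
  omega

section Blocks

variable {P s : ℕ} {l l' : List (Fin n)}

theorem block_eq_of_rtake_eq (hs : (P + 1) * t ≤ s) (h : l.rtake s = l'.rtake s) :
    block t P l = block t P l' := by
  unfold block
  rw [← rtake_rtake (l := l) hs, ← rtake_rtake (l := l') hs, h]

theorem length_block (h : (P + 1) * t ≤ l.length) : (block t P l).length = t := by
  simp only [block, length_take, rtake, length_drop]
  rw [Nat.sub_sub_self h, min_eq_left (Nat.le_mul_of_pos_left t P.succ_pos)]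

theorem rtake_eq_block_append (h : (P + 1) * t ≤ l.length) :
    l.rtake ((P + 1) * t) = block t P l ++ l.rtake (P * t) := by
  have : (P + 1) * t = P * t + t := Nat.succ_mul P t
  conv_lhs => rw [← take_append_drop t (l.rtake ((P + 1) * t))]
  congr 1
  simp only [rtake, drop_drop]
  congr 1
  omega

theorem le_target : (P + 1) * t ≤ target t L P l := Nat.le_add_right _ _

theorem target_lt (hn : 1 < n) (h : (P + 1) * t ≤ l.length) :
    target t L P l < (P + 1) * t + (2 * L + 1) * n ^ t := by
  have := enc_lt hn (block t P l)
  rw [length_block h] at this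
  have := Nat.mul_lt_mul_of_pos_left this (by omega : 0 < 2 * L + 1)
  unfold target
  omega

/-- All targets of class `P` are `≡ (P + 1) t` modulo `2 L + 1`. -/
theorem target_ne_target_add_one (hL : 1 ≤ L) : target t L P l ≠ target t L P l' + 1 := by
  intro h
  unfold target at h
  have h' : (2 * L + 1) * enc (block t P l) = (2 * L + 1) * enc (block t P l') + 1 := by omega
  have hdvd : 2 * L + 1 ∣ 1 :=
    (Nat.dvd_add_right (dvd_mul_right _ _)).1 (h' ▸ dvd_mul_right (2 * L + 1) _)
  have := Nat.le_of_dvd one_pos hdvd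
  omega

theorem target_eq_of_rtake_eq (hs : (P + 1) * t ≤ s) (h : l.rtake s = l'.rtake s) :
    target t L P l = target t L P l' := by
  rw [target, target, block_eq_of_rtake_eq hs h]

end Blocks

theorem IsBeacon.length_eq_of_rtake_eq {x z : List (Fin n)} {s : ℕ} (hx : IsBeacon t L k x)
    (hs : (enc (x.take L) + 1) * t ≤ s) (h : x.rtake s = z.rtake s) :
    x.length = L + target t L (enc (x.take L)) z := by
  obtain ⟨hLx, -, hw⟩ := hx
  set w := x.drop L
  have hs' : (enc (x.take L) + 1) * t ≤ min s w.length := le_min hs (hw ▸ le_target)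
  have hwz : w.rtake (min s w.length) = z.rtake (min s w.length) := calc
    w.rtake _ = (x.take L ++ w).rtake _ := (rtake_append_of_le_length (min_le_right _ _)).symm
    _ = (x.rtake s).rtake _ := by rw [take_append_drop, rtake_rtake (min_le_left _ _)]
    _ = z.rtake _ := by rw [h, rtake_rtake (min_le_left _ _)]
  rw [← target_eq_of_rtake_eq hs' hwz, ← hw, length_drop]
  omega

theorem isBeacon_append {m w : List (Fin n)} (hm : m.length = L) (hP : enc m < k / t)
    (hw : w.length = target t L (enc m) w) : IsBeacon t L k (m ++ w) := by
  rw [IsBeacon, take_left' hm, drop_left' hm, length_append]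
  exact ⟨by omega, hP, hw⟩

section Colors

variable {a b : Fin n} {l x : List (Fin n)}

theorem treeColor_nil : treeColor t L k ([] : List (Fin n)) = 1 := rfl

theorem two_le_treeColor (a : Fin n) (l : List (Fin n)) : 2 ≤ treeColor t L k (a :: l) := by
  dsimp only [treeColor]
  split_ifs
  exacts [Nat.le_add_right _ _, (Nat.le_add_right _ _).trans (Nat.le_add_right _ _)]

theorem treeColor_eq_one_iff : treeColor t L k x = 1 ↔ x = [] := by
  refine ⟨fun h => ?_, fun h => h ▸ rfl⟩
  rcases x with _ | ⟨a, l⟩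
  · rfl
  · exact absurd h (one_lt_two.trans_le (two_le_treeColor a l)).ne'

theorem treeColor_of_isBeacon (hx : IsBeacon t L k x) (hne : x ≠ []) :
    treeColor t L k x = 2 + enc (x.take L) := by
  obtain ⟨a, l, rfl⟩ := exists_cons_of_ne_nil hne
  exact if_pos hx

theorem treeColor_lt_of_isBeacon (hx : IsBeacon t L k x) (hne : x ≠ []) :
    treeColor t L k x < 2 + k / t := by
  rw [treeColor_of_isBeacon hx hne]
  exact Nat.add_lt_add_left hx.2.1 2

theorem treeColor_of_not_isBeacon (h : ¬IsBeacon t L k (a :: l)) :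
    treeColor t L k (a :: l) =
      2 + k / t + (modulus n t L * a + (l.length + 1) % modulus n t L) :=
  if_neg h

theorem le_treeColor_of_not_isBeacon (h : ¬IsBeacon t L k (a :: l)) :
    2 + k / t ≤ treeColor t L k (a :: l) :=
  (treeColor_of_not_isBeacon h).symm ▸ Nat.le_add_right _ _

theorem treeColor_ne_of_isBeacon {y : List (Fin n)} (hx : IsBeacon t L k x) (hne : x ≠ [])
    (hy : ¬IsBeacon t L k (a :: y)) : treeColor t L k x ≠ treeColor t L k (a :: y) :=
  ((treeColor_lt_of_isBeacon hx hne).trans_le (le_treeColor_of_not_isBeacon hy)).ne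

theorem isBeacon_of_treeColor_eq {P : ℕ} (hP : P < k / t) (h : treeColor t L k x = 2 + P) :
    IsBeacon t L k x ∧ enc (x.take L) = P := by
  rcases x with _ | ⟨a, l⟩
  · rw [treeColor_nil] at h
    omega
  by_cases hx : IsBeacon t L k (a :: l)
  · rw [treeColor_of_isBeacon hx (cons_ne_nil _ _)] at h
    exact ⟨hx, by omega⟩
  · have := le_treeColor_of_not_isBeacon hx
    omega

theorem length_mod_eq_of_treeColor_eq (ha : ¬IsBeacon t L k (a :: l))
    (h : treeColor t L k x = treeColor t L k (a :: l)) :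
    x.length % modulus n t L = (l.length + 1) % modulus n t L := by
  rcases x with _ | ⟨b, x⟩
  · exact absurd h (by rw [treeColor_nil]; exact (one_lt_two.trans_le (two_le_treeColor a l)).ne)
  by_cases hx : IsBeacon t L k (b :: x)
  · exact absurd h (treeColor_ne_of_isBeacon hx (cons_ne_nil _ _) ha)
  · rw [treeColor_of_not_isBeacon hx, treeColor_of_not_isBeacon ha] at h
    have h' := congrArg (· % modulus n t L) (Nat.add_left_cancel h)
    simpa only [Nat.mul_add_mod, Nat.mod_mod, length_cons] using h'

theorem treeColor_mem_Icc (hM : 0 < modulus n t L) (x : List (Fin n)) :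
    treeColor t L k x ∈ Finset.Icc 1 (1 + k / t + n * modulus n t L) := by
  rw [Finset.mem_Icc]
  rcases x with _ | ⟨a, l⟩
  · exact ⟨le_rfl, (Nat.le_add_right 1 (k / t)).trans (Nat.le_add_right _ _)⟩
  refine ⟨(Nat.le_succ 1).trans (two_le_treeColor a l), ?_⟩
  by_cases hx : IsBeacon t L k (a :: l)
  · have := treeColor_lt_of_isBeacon hx (cons_ne_nil _ _)
    omega
  · rw [treeColor_of_not_isBeacon hx]
    have h₁ := Nat.mod_lt (l.length + 1) hM
    have h₂ : modulus n t L * (a + 1) ≤ n * modulus n t L := by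
      rw [mul_comm n]
      exact Nat.mul_le_mul_left _ a.2
    rw [mul_add_one] at h₂
    omega

theorem treeColor_cons_ne_cons (hL : 1 ≤ L) (hab : a ≠ b) :
    treeColor t L k (a :: l) ≠ treeColor t L k (b :: l) := by
  intro h
  by_cases ha : IsBeacon t L k (a :: l) <;> by_cases hb : IsBeacon t L k (b :: l)
  · rw [treeColor_of_isBeacon ha (cons_ne_nil _ _), treeColor_of_isBeacon hb (cons_ne_nil _ _),
      ← Nat.sub_add_cancel hL, take_succ_cons, take_succ_cons, enc_cons, enc_cons] at h
    exact hab (Fin.ext (by omega))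
  · exact treeColor_ne_of_isBeacon ha (cons_ne_nil _ _) hb h
  · exact treeColor_ne_of_isBeacon hb (cons_ne_nil _ _) ha h.symm
  · rw [treeColor_of_not_isBeacon ha, treeColor_of_not_isBeacon hb] at h
    exact hab (Fin.ext (Nat.eq_of_mul_eq_mul_left (modulus_pos (n := n) (t := t) hL) (by omega)))

theorem treeColor_cons_ne (hL : 1 ≤ L) : treeColor t L k (a :: l) ≠ treeColor t L k l := by
  intro h
  rcases l with _ | ⟨b, l⟩
  · rw [treeColor_nil, treeColor_eq_one_iff] at h
    exact cons_ne_nil _ _ h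
  by_cases ha : IsBeacon t L k (a :: b :: l) <;> by_cases hb : IsBeacon t L k (b :: l)
  · rw [treeColor_of_isBeacon ha (cons_ne_nil _ _), treeColor_of_isBeacon hb (cons_ne_nil _ _)]
      at h
    obtain ⟨-, -, hda⟩ := ha
    obtain ⟨hLb, -, hdb⟩ := hb
    rw [Nat.add_left_cancel h] at hda
    simp only [length_drop, length_cons] at hda hdb hLb
    exact target_ne_target_add_one (t := t) (P := enc ((b :: l).take L))
      (l := (a :: b :: l).drop L) (l' := (b :: l).drop L) hL (by omega)
  · exact treeColor_ne_of_isBeacon ha (cons_ne_nil _ _) hb h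
  · exact treeColor_ne_of_isBeacon hb (cons_ne_nil _ _) ha h.symm
  · have hmod := length_mod_eq_of_treeColor_eq hb h
    simp only [length_cons] at hmod
    have hdvd : modulus n t L ∣ 1 := by
      simpa using (Nat.modEq_iff_dvd' (Nat.le_succ _)).1 hmod.symm
    have := Nat.le_of_dvd one_pos hdvd
    unfold modulus at this
    omega

end Colors

section Locating

theorem colorClassDist_one (v : naryVertex n k) :
    colorClassDist (naryTree n k) (vertexColor t L k) v 1 = v.1.length := by
  refine le_antisymm ((colorClassDist_le (x := naryRoot n k) rfl).trans (naryTree_dist_root v).le)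
    (le_colorClassDist (x := naryRoot n k) rfl fun y hy => ?_)
  rw [show y = naryRoot n k from Subtype.ext (treeColor_eq_one_iff.1 hy), naryTree_dist_root]

/-- The beacon `m ++ z.rtake (target t L P z)` is within distance `|z| + L - target`, and any
other beacon of class `P` either leaves the root path of `z` above depth `(P + 1) t` or, sharing
its `P`-th block, sits at depth `L + target`. -/
theorem abs_colorClassDist_add_target_sub_length_le (hLk : k < n ^ L) {P : ℕ} (hP : P < k / t)
    (z : naryVertex n k) (hz : L + target t L P z.1 ≤ z.1.length) :
    |((colorClassDist (naryTree n k) (vertexColor t L k) z (2 + P) + target t L P z.1 : ℕ) : ℤ)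
      - z.1.length| ≤ L := by
  set ℓ := target t L P z.1
  have hℓ : (z.1.rtake ℓ).length = ℓ := by rw [length_rtake]; omega
  obtain ⟨m, hm, hmP⟩ := exists_length_eq_enc_eq (n := n)
    ((hP.trans_le (Nat.div_le_self k t)).trans hLk)
  have hbeacon : IsBeacon t L k (m ++ z.1.rtake ℓ) := isBeacon_append hm (hmP ▸ hP)
    (by rw [hmP, hℓ]; exact target_eq_of_rtake_eq le_target (rtake_rtake le_rfl).symm)
  have hx₀len : (m ++ z.1.rtake ℓ).length = L + ℓ := by rw [length_append, hm, hℓ]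
  have ht : 0 < t := Nat.pos_of_ne_zero (by rintro rfl; simp at hP)
  have hPℓ : (P + 1) * t ≤ ℓ := le_target
  have hPt : t ≤ (P + 1) * t := Nat.le_mul_of_pos_left t (Nat.succ_pos P)
  obtain ⟨x₀, hx₀⟩ : ∃ x₀ : naryVertex n k, x₀.1 = m ++ z.1.rtake ℓ :=
    ⟨⟨m ++ z.1.rtake ℓ, by have := z.2; omega⟩, rfl⟩
  have hcx₀ : vertexColor t L k x₀ = 2 + P := by
    rw [vertexColor, hx₀, treeColor_of_isBeacon hbeacon (ne_nil_of_length_pos (by omega)),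
      take_left' hm, hmP]
  have hupper : colorClassDist (naryTree n k) (vertexColor t L k) z (2 + P) + ℓ
      ≤ z.1.length + L := by
    have hd := naryTree_dist_add_two_mul z x₀
    have hcsl : ℓ ≤ z.1.commonSuffixLength x₀.1 :=
      le_commonSuffixLength (by omega) (by rw [hx₀, hx₀len]; omega)
        (by rw [hx₀, rtake_append_of_le_length hℓ.ge, rtake_rtake le_rfl])
    have := colorClassDist_le (G := naryTree n k) (v := z) hcx₀
    rw [hx₀, hx₀len] at hd
    rw [hx₀] at hcsl
    omega
  have hlower : z.1.length - ℓ - L ≤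
      colorClassDist (naryTree n k) (vertexColor t L k) z (2 + P) := by
    refine le_colorClassDist hcx₀ fun y hy => ?_
    obtain ⟨hyb, hyP⟩ := isBeacon_of_treeColor_eq hP hy
    have hdist := naryTree_length_sub_commonSuffixLength_le_dist z y
    by_cases hs : (P + 1) * t ≤ z.1.commonSuffixLength y.1
    · have hylen := hyb.length_eq_of_rtake_eq (z := z.1) (hyP ▸ hs)
        rtake_commonSuffixLength.symm
      have : z.1.commonSuffixLength y.1 ≤ y.1.length := commonSuffixLength_le_right
      rw [hyP] at hylen
      omega
    · omega
  rw [abs_le]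
  push_cast
  constructor <;> omega

/-- Members of the color class of the ancestor `b :: z.rtake s` of `z`: for a beacon class
they leave the root path of `z` above depth `s + 1` or sit at depth `s + 1`; for a residue
class their depth is `≡ s + 1` modulo `modulus n t L`, which exceeds twice the depth gap. -/
theorem length_eq_or_lt_dist_of_treeColor_eq (hL : 1 ≤ L) {z x : naryVertex n k} {b : Fin n}
    {s : ℕ} (hs : s < z.1.length) (hM : 2 * (z.1.length - (s + 1)) < modulus n t L)
    (hx : treeColor t L k x.1 = treeColor t L k (b :: z.1.rtake s)) :
    x.1.length = s + 1 ∨ z.1.length - (s + 1) < (naryTree n k).dist z x := by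
  have hzs : (z.1.rtake s).length = s := by rw [length_rtake]; omega
  have hdist := naryTree_length_sub_commonSuffixLength_le_dist z x
  by_cases hb : IsBeacon t L k (b :: z.1.rtake s)
  · have hPs : (enc ((b :: z.1.rtake s).take L) + 1) * t ≤ s := by
      have h₁ := hb.2.2
      rw [length_drop, length_cons, hzs] at h₁
      have h₂ : (enc ((b :: z.1.rtake s).take L) + 1) * t
          ≤ target t L (enc ((b :: z.1.rtake s).take L)) ((b :: z.1.rtake s).drop L) :=
        le_target
      omega
    have hanc := hb.length_eq_of_rtake_eq (z := z.1) hPs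
      (by rw [rtake_cons_of_le_length b hzs.ge, rtake_rtake le_rfl])
    rw [length_cons, hzs] at hanc
    obtain ⟨hxb, hxP⟩ := isBeacon_of_treeColor_eq hb.2.1
      (hx.trans (treeColor_of_isBeacon hb (cons_ne_nil _ _)))
    generalize enc ((b :: z.1.rtake s).take L) = P at hPs hanc hxP
    by_cases hc : (P + 1) * t ≤ z.1.commonSuffixLength x.1
    · have hxlen := hxb.length_eq_of_rtake_eq (z := z.1) (hxP ▸ hc)
        rtake_commonSuffixLength.symm
      rw [hxP] at hxlen
      omega
    · omega
  · have hmod := length_mod_eq_of_treeColor_eq hb hx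
    rw [hzs] at hmod
    have hd := naryTree_dist_add_two_mul z x
    have : z.1.commonSuffixLength x.1 ≤ x.1.length := commonSuffixLength_le_right
    have : z.1.commonSuffixLength x.1 ≤ z.1.length := commonSuffixLength_le_left
    rcases lt_trichotomy x.1.length (s + 1) with hlt | heq | hgt
    · have := Nat.le_of_dvd (by omega) ((Nat.modEq_iff_dvd' hlt.le).1 hmod)
      omega
    · exact Or.inl heq
    · have := Nat.le_of_dvd (by omega) ((Nat.modEq_iff_dvd' hgt.le).1 hmod.symm)
      omega

theorem block_eq_of_colorClassDist_eq (hn : 1 < n) (hLk : k < n ^ L) {u v : naryVertex n k}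
    {P : ℕ} (hP : P < k / t) (hlen : u.1.length = v.1.length)
    (hdeep : L + (P + 1) * t + (2 * L + 1) * n ^ t ≤ v.1.length)
    (h : colorClassDist (naryTree n k) (vertexColor t L k) u (2 + P)
      = colorClassDist (naryTree n k) (vertexColor t L k) v (2 + P)) :
    block t P u.1 = block t P v.1 := by
  have hPu : (P + 1) * t ≤ u.1.length := by omega
  have hPv : (P + 1) * t ≤ v.1.length := by omega
  have hu := abs_le.1 <| abs_colorClassDist_add_target_sub_length_le hLk hP u
    (by have := target_lt (L := L) hn hPu; omega)
  have hv := abs_le.1 <| abs_colorClassDist_add_target_sub_length_le hLk hP v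
    (by have := target_lt (L := L) hn hPv; omega)
  refine enc_injective hn (by rw [length_block hPu, length_block hPv]) ?_
  unfold target at hu hv
  -- the two multiples of `2 L + 1` differ by at most `2 L`
  apply le_antisymm <;>
    refine Nat.lt_succ_iff.1 (Nat.lt_of_mul_lt_mul_left (a := 2 * L + 1) ?_) <;>
    rw [Nat.mul_succ] <;> omega

theorem rtake_succ_eq_of_colorClassDist_eq (hL : 1 ≤ L) {u v : naryVertex n k} {s : ℕ}
    (hlen : u.1.length = v.1.length) (hs : s < v.1.length)
    (hM : 2 * (v.1.length - (s + 1)) < modulus n t L) (hsv : u.1.rtake s = v.1.rtake s)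
    (h : ∀ i, colorClassDist (naryTree n k) (vertexColor t L k) u i
      = colorClassDist (naryTree n k) (vertexColor t L k) v i) :
    u.1.rtake (s + 1) = v.1.rtake (s + 1) := by
  obtain ⟨b, hb⟩ := exists_rtake_succ_eq_cons hs
  obtain ⟨b', hb'⟩ := exists_rtake_succ_eq_cons (hlen ▸ hs)
  have hcol : vertexColor t L k (naryAncestor v (s + 1)) = treeColor t L k (b :: v.1.rtake s) :=
    congrArg (treeColor t L k) hb
  have hv : colorClassDist (naryTree n k) (vertexColor t L k) v
      (treeColor t L k (b :: v.1.rtake s)) = v.1.length - (s + 1) := by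
    refine le_antisymm ((colorClassDist_le hcol).trans (naryTree_dist_ancestor v hs).le)
      (le_colorClassDist hcol fun y hy => ?_)
    rcases length_eq_or_lt_dist_of_treeColor_eq hL hs hM hy with hy | hy
    · exact hy ▸ naryTree_length_sub_length_le_dist v y
    · exact hy.le
  obtain ⟨x, hx, hxd⟩ := exists_colorClassDist_eq (G := naryTree n k) (v := u) hcol
  rw [h, hv, ← hlen] at hxd
  rw [← hsv] at hx
  have hxu : x.1 = u.1.rtake (s + 1) := by
    rcases length_eq_or_lt_dist_of_treeColor_eq hL (hlen ▸ hs) (hlen ▸ hM) hx with hx | hx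
    · rw [← hx]
      exact naryTree_eq_rtake_of_dist_eq (by omega) (by omega)
    · omega
  have hbb : b' = b := by
    by_contra hne
    refine treeColor_cons_ne_cons hL hne (l := u.1.rtake s) (t := t) (k := k) ?_
    rw [← hb', ← hxu]
    exact hx
  rw [hb, hb', hsv, hbb]

theorem injective_colorClassDist_vertexColor (hn : 1 < n) (ht : 0 < t) (hL : 1 ≤ L)
    (hLk : k < n ^ L) :
    Function.Injective fun v (i : ℕ) =>
      colorClassDist (naryTree n k) (vertexColor t L k) v i := by
  intro u v huv
  have h := congrFun huv
  have hlen : u.1.length = v.1.length := by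
    rw [← colorClassDist_one (t := t) (L := L) u, ← colorClassDist_one (t := t) (L := L) v]
    exact h 1
  set s := u.1.commonSuffixLength v.1
  have hsv : u.1.rtake s = v.1.rtake s := rtake_commonSuffixLength
  by_contra hne
  have hs : s < v.1.length := by
    refine lt_of_le_of_ne commonSuffixLength_le_right fun hs => hne (Subtype.ext ?_)
    rw [← rtake_length_self u.1, ← rtake_length_self v.1, hlen, ← hs, hsv]
  have hlt : ∀ s', s < s' → s' ≤ v.1.length → u.1.rtake s' ≠ v.1.rtake s' :=
    fun s' hs' hs'v he => (le_commonSuffixLength (by omega) hs'v he).not_gt hs'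
  by_cases hdeep : s + t + (2 * L + 1) * n ^ t + L ≤ v.1.length
  · -- the first difference lies in block `s / t`, which class `2 + s / t` sees
    set P := s / t
    have hPs : P * t ≤ s := Nat.div_mul_le_self s t
    have hsucc : (P + 1) * t = P * t + t := Nat.succ_mul P t
    have hsP : s < (P + 1) * t := by rw [mul_comm]; exact Nat.lt_mul_div_succ s ht
    have hP : P < k / t := by
      rw [Nat.lt_iff_add_one_le, Nat.le_div_iff_mul_le ht]
      have := v.2
      omega
    have hblock := block_eq_of_colorClassDist_eq hn hLk hP hlen (by omega) (h _)
    refine hlt _ hsP (by omega) ?_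
    rw [rtake_eq_block_append (by omega), rtake_eq_block_append (by omega), hblock,
      ← rtake_rtake (l := u.1) hPs, ← rtake_rtake (l := v.1) hPs, hsv]
  · exact hlt _ (Nat.lt_succ_self s) hs
      (rtake_succ_eq_of_colorClassDist_eq hL hlen hs (by unfold modulus; omega) hsv h)

theorem isLocatingColoring_vertexColor (hn : 1 < n) (ht : 0 < t) (hL : 1 ≤ L)
    (hLk : k < n ^ L) :
    IsLocatingColoring (naryTree n k) (1 + k / t + n * modulus n t L) (vertexColor t L k) := by
  refine ⟨fun v => treeColor_mem_Icc (modulus_pos hL) v.1, ?_,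
    injective_colorClassDist_vertexColor hn ht hL hLk⟩
  rintro u v (⟨a, ha⟩ | ⟨a, ha⟩) <;> unfold vertexColor <;> rw [ha]
  exacts [treeColor_cons_ne hL, (treeColor_cons_ne hL).symm]

end Locating

end NaryTreeColoring

open NaryTreeColoring

theorem locatingChromaticNumber_naryTree_le {n t : ℕ} (hn : 1 < n) (ht : 0 < t) (k : ℕ) :
    locatingChromaticNumber (naryTree n k) ≤ 1 + k / t + n * modulus n t (Nat.log n k + 1) :=
  Nat.sInf_le ⟨_, isLocatingColoring_vertexColor hn ht (Nat.succ_pos _)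
    (Nat.lt_pow_succ_log_self hn k)⟩

theorem tendsto_natLog_div_atTop (b : ℕ) :
    Tendsto (fun k : ℕ => (Nat.log b k : ℝ) / k) atTop (𝓝 0) := by
  have hlog : Tendsto (fun k : ℕ => Real.log k / k) atTop (𝓝 0) := by
    simpa [Function.comp_def] using
      (Real.tendsto_pow_log_div_mul_add_atTop 1 0 1 one_ne_zero).comp tendsto_natCast_atTop_atTop
  refine squeeze_zero (fun k => by positivity) (fun k => ?_)
    (by simpa using hlog.div_const (Real.log b))
  calc (Nat.log b k : ℝ) / k ≤ Real.logb b k / k := by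
        gcongr
        exact Real.natLog_le_logb k b
    _ = Real.log k / k / Real.log b := by rw [Real.logb, div_right_comm]

theorem tendsto_modulus_div_atTop (n t : ℕ) :
    Tendsto (fun k : ℕ => ((1 + n * modulus n t (Nat.log n k + 1) : ℕ) : ℝ) / k) atTop
      (𝓝 0) := by
  have h := (tendsto_const_div_atTop_nhds_zero_nat (1 + n * (2 * t + 6 * n ^ t + 2) : ℝ)).add
    ((tendsto_natLog_div_atTop n).const_mul (n * (4 * n ^ t + 2) : ℝ))
  rw [mul_zero, add_zero] at h
  refine h.congr fun k => ?_
  simp only [modulus]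
  push_cast
  ring

theorem locatingChromaticNumber_naryTree_div_le {n : ℕ} (hn : 1 < n) (t k : ℕ) :
    (locatingChromaticNumber (naryTree n k) : ℝ) / k ≤
      1 / (t + 1) + ((1 + n * modulus n (t + 1) (Nat.log n k + 1) : ℕ) : ℝ) / k := by
  have h := locatingChromaticNumber_naryTree_le hn (by omega : 0 < t + 1) k
  have hdiv : ((k / (t + 1) : ℕ) : ℝ) / k ≤ 1 / (t + 1) := by
    rcases Nat.eq_zero_or_pos k with rfl | hk
    · simp only [Nat.zero_div, CharP.cast_eq_zero, div_zero]
      positivity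
    · rw [div_le_iff₀ (by positivity)]
      calc ((k / (t + 1) : ℕ) : ℝ) ≤ (k : ℝ) / (t + 1) := by exact_mod_cast Nat.cast_div_le
        _ = 1 / (t + 1) * k := by ring
  calc (locatingChromaticNumber (naryTree n k) : ℝ) / k
      ≤ (((k / (t + 1) : ℕ) : ℝ) + ((1 + n * modulus n (t + 1) (Nat.log n k + 1) : ℕ) : ℝ))
          / k := by
        gcongr
        exact_mod_cast (by omega : locatingChromaticNumber (naryTree n k) ≤ _ + _)
    _ ≤ _ := by
        rw [add_div]
        gcongr

/-- For every fixed integer `n ≥ 3`, `χ_L(T(n,k)) = o(k)` as `k → ∞`; that is,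
`χ_L(T(n,k)) / k → 0` as `k → ∞`. -/
theorem locatingChromatic_naryTree_littleO (n : ℕ) (hn : 3 ≤ n) :
    Filter.Tendsto
      (fun k : ℕ => (locatingChromaticNumber (naryTree n k) : ℝ) / (k : ℝ))
      Filter.atTop (nhds 0) := by
  refine tendsto_order.2 ⟨fun a ha => .of_forall fun k => ha.trans_le (by positivity),
    fun ε hε => ?_⟩
  obtain ⟨t, ht⟩ := exists_nat_one_div_lt hε
  filter_upwards [(tendsto_modulus_div_atTop n (t + 1)).eventually (gt_mem_nhds (sub_pos.2 ht))]
    with k hk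
  have := locatingChromaticNumber_naryTree_div_le (by omega : 1 < n) t k
  linarith
end
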